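/- If the Fourier coefficients of F are purely imaginary and those of G are real, i.e. F_q(ξ;ℏ) ∈ iℝ and G_q(ξ;ℏ) ∈ ℝ for all q ∈ ℤ^l, ξ ∈ ℝ^l, ℏ ∈ (0,1], then the Fourier coefficients of their Moyal bracket are real: ({F,G}_M)_q(ξ;ℏ) := ∫_{ℝ^l} ({F,G}_M)^∧_q(p;ℏ) e^{i⟨p,ξ⟩} dp ∈ ℝ for all q ∈ ℤ^l, ξ ∈ ℝ^l. -/
import Mathlib


open MeasureTheory Complex Real

noncomputable section

/-- The Fourier data of the Moyal bracket of two symbols on `ℝ^l × 𝕋^l`, given the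
Fourier data `F̂_q(p)`, `Ĝ_q(p)` of the symbols:
`({F,G}_M)^∧_q(p) = (2/ℏ) ∫ Σ_{q'} F̂_{q−q'}(p−p') Ĝ_{q'}(p') sin[(ℏ/2)(⟨p',q⟩−⟨p,q'⟩)] dp'`. -/
def moyalHat (l : ℕ) (ℏ : ℝ)
    (Fhat Ghat : (Fin l → ℤ) → (Fin l → ℝ) → ℂ)
    (q : Fin l → ℤ) (p : Fin l → ℝ) : ℂ :=
  ((2 / ℏ : ℝ) : ℂ) * ∫ p' : Fin l → ℝ, ∑' q' : Fin l → ℤ,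
    Fhat (q - q') (p - p') * Ghat q' p' *
      ((Real.sin ((ℏ / 2) * ((∑ j, p' j * (q j : ℝ)) - ∑ j, p j * (q' j : ℝ))) : ℝ) : ℂ)

/-- if the `x`-Fourier coefficients `F_q(ξ;ℏ)` are purely imaginary and the
`G_q(ξ;ℏ)` are real-valued, then the Fourier coefficients of their Moyal bracket,
`({F,G}_M)_q(ξ;ℏ) = ∫ ({F,G}_M)^∧_q(p;ℏ) e^{i⟨p,ξ⟩} dp`, are real. -/
theorem moyal_bracket_of_imaginary_with_real_coefficients_real
    (l : ℕ) (hl : 1 ≤ l)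
    (Fc Gc : ℝ → (Fin l → ℤ) → (Fin l → ℝ) → ℂ)
    (Fhat Ghat : ℝ → (Fin l → ℤ) → (Fin l → ℝ) → ℂ)
    (hFhat : ∀ ℏ ∈ Set.Ioc (0 : ℝ) 1, ∀ q p, Fhat ℏ q p =
      (((2 * π) ^ (-(l : ℝ) / 2) : ℝ) : ℂ) *
        ∫ ξ : Fin l → ℝ, Fc ℏ q ξ * Complex.exp (-Complex.I * (∑ j, p j * ξ j)))
    (hGhat : ∀ ℏ ∈ Set.Ioc (0 : ℝ) 1, ∀ q p, Ghat ℏ q p =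
      (((2 * π) ^ (-(l : ℝ) / 2) : ℝ) : ℂ) *
        ∫ ξ : Fin l → ℝ, Gc ℏ q ξ * Complex.exp (-Complex.I * (∑ j, p j * ξ j)))
    (hFimaginary : ∀ ℏ ∈ Set.Ioc (0 : ℝ) 1, ∀ q ξ, (Fc ℏ q ξ).re = 0)
    (hGreal : ∀ ℏ ∈ Set.Ioc (0 : ℝ) 1, ∀ q ξ, (Gc ℏ q ξ).im = 0) :
    ∀ ℏ ∈ Set.Ioc (0 : ℝ) 1, ∀ (q : Fin l → ℤ) (ξ : Fin l → ℝ),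
      (∫ p : Fin l → ℝ, moyalHat l ℏ (Fhat ℏ) (Ghat ℏ) q p *
        Complex.exp (Complex.I * (∑ j, p j * ξ j))).im = 0 := by
  intro ℏ hℏ q₀ ξ₀
  -- conjugation symmetry of Fhat
  have hF : ∀ q p, (starRingEnd ℂ) (Fhat ℏ q p) = -Fhat ℏ q (-p) := by
    intro q p
    rw [hFhat ℏ hℏ q p, hFhat ℏ hℏ q (-p), map_mul, Complex.conj_ofReal, ← integral_conj,
      ← mul_neg, ← integral_neg]
    congr 1
    refine integral_congr_ae (Filter.Eventually.of_forall fun y => ?_)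
    beta_reduce
    have hc : (starRingEnd ℂ) (Fc ℏ q y) = -Fc ℏ q y := by
      apply Complex.ext <;> simp [hFimaginary ℏ hℏ q y]
    rw [map_mul, hc, ← Complex.exp_conj, map_mul, map_neg, Complex.conj_I, Complex.conj_ofReal]
    have hs : (∑ j, (-p) j * y j) = -∑ j, p j * y j := by
      simp [neg_mul, Finset.sum_neg_distrib]
    rw [hs]
    push_cast
    ring_nf
  -- conjugation symmetry of Ghat
  have hG : ∀ q p, (starRingEnd ℂ) (Ghat ℏ q p) = Ghat ℏ q (-p) := by
    intro q p
    rw [hGhat ℏ hℏ q p, hGhat ℏ hℏ q (-p), map_mul, Complex.conj_ofReal, ← integral_conj]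
    congr 1
    refine integral_congr_ae (Filter.Eventually.of_forall fun y => ?_)
    beta_reduce
    have hc : (starRingEnd ℂ) (Gc ℏ q y) = Gc ℏ q y :=
      Complex.conj_eq_iff_im.mpr (hGreal ℏ hℏ q y)
    rw [map_mul, hc, ← Complex.exp_conj, map_mul, map_neg, Complex.conj_I, Complex.conj_ofReal]
    have hs : (∑ j, (-p) j * y j) = -∑ j, p j * y j := by
      simp [neg_mul, Finset.sum_neg_distrib]
    rw [hs]
    push_cast
    ring_nf
  -- conjugation symmetry of moyalHat
  have hM : ∀ p, (starRingEnd ℂ) (moyalHat l ℏ (Fhat ℏ) (Ghat ℏ) q₀ p)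
      = moyalHat l ℏ (Fhat ℏ) (Ghat ℏ) q₀ (-p) := by
    intro p
    unfold moyalHat
    rw [map_mul, Complex.conj_ofReal, ← integral_conj,
      ← integral_neg_eq_self (fun p' : Fin l → ℝ => ∑' q' : Fin l → ℤ,
        Fhat ℏ (q₀ - q') (-p - p') * Ghat ℏ q' p' *
          ((Real.sin ((ℏ / 2) * ((∑ j, p' j * (q₀ j : ℝ)) - ∑ j, (-p) j * (q' j : ℝ))) : ℝ) : ℂ))
        volume]
    congr 1
    refine integral_congr_ae (Filter.Eventually.of_forall fun p' => ?_)
    beta_reduce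
    rw [starRingEnd_apply, tsum_star]
    apply tsum_congr
    intro q'
    simp only [← starRingEnd_apply, map_mul, hF, hG, Complex.conj_ofReal]
    have h1 : -p - -p' = -(p - p') := by abel
    rw [h1]
    have h2 : Real.sin (ℏ / 2 * ((∑ j, (-p') j * (q₀ j : ℝ)) - ∑ j, (-p) j * (q' j : ℝ)))
        = -Real.sin (ℏ / 2 * ((∑ j, p' j * (q₀ j : ℝ)) - ∑ j, p j * (q' j : ℝ))) := by
      rw [← Real.sin_neg]
      congr 1
      simp [neg_mul, Finset.sum_neg_distrib]
      ring
    rw [h2]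
    push_cast
    ring
  -- conclude
  rw [← Complex.conj_eq_iff_im, ← integral_conj,
    ← integral_neg_eq_self (fun p : Fin l → ℝ => moyalHat l ℏ (Fhat ℏ) (Ghat ℏ) q₀ p *
      Complex.exp (Complex.I * (∑ j, p j * ξ₀ j))) volume]
  refine integral_congr_ae (Filter.Eventually.of_forall fun p => ?_)
  beta_reduce
  rw [map_mul, hM, ← Complex.exp_conj, map_mul, Complex.conj_I, Complex.conj_ofReal]
  have hs : (∑ j, (-p) j * ξ₀ j) = -∑ j, p j * ξ₀ j := by
    simp [neg_mul, Finset.sum_neg_distrib]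
  rw [hs]
  push_cast
  ring_nf

end
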